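/- arXiv:1712.04413 — 2 statements merged into one kernel-verified Lean document; each statement's English description precedes it below -/
import Mathlib

section
/- Let n ≥ 2 and let ℓ₁,…,ℓₙ be positive reals. Define S_{i,k} := ℓᵢ + ℓᵢ₊₁ + … + ℓ_{i+k-1} (sum of k consecutive terms starting at index i), and for 1 ≤ k ≤ n-1 define L_k := Σ_{i=1}^{n-k} log(S_{i,k+1}²/(S_{i,k}·S_{i+1,k})). Then for integers 1 ≤ a ≤ b ≤ n-1, Σ_{j=a}^{b} L_j ≥ Σ_{i=1}^{n-b} log(S_{i,b+1}²/(S_{i,a}·S_{i+(b-a)+1,a})). -/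
/-!
Write `u k i = log S_{i,k}`. Then `L_k = ∑ᵢ (2 u (k+1) i - u k i - u k (i+1))`, and going from
`b` to `b + 1` the left-hand side grows by `L_{b+1}` minus two boundary terms of the form
`log S_{i,b+1} - log S_{j,a}` in which the window `[j, j+a)` lies inside `[i, i+b+1)`.
Since the `ℓᵢ` are positive, such a window sum is at most the larger one, so the boundary terms
are nonnegative and induction on `b` gives the inequality, with equality at `b = a`.
-/

open Finset

lemma sum_range_shift_le_of_subset {ℓ : ℕ → ℝ} {i p j q : ℕ} (hij : i ≤ j)
    (hjq : j + q ≤ i + p) (hℓ : ∀ x, i ≤ x → x < i + p → 0 ≤ ℓ x) :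
    ∑ h ∈ range q, ℓ (j + h) ≤ ∑ h ∈ range p, ℓ (i + h) := by
  rw [← Nat.add_sub_cancel_left (n := j) (m := q), ← Nat.add_sub_cancel_left (n := i) (m := p),
    ← sum_Ico_eq_sum_range, ← sum_Ico_eq_sum_range]
  refine sum_le_sum_of_subset_of_nonneg (Ico_subset_Ico hij hjq) fun x hx _ => ?_
  obtain ⟨hix, hxp⟩ := mem_Ico.mp hx
  exact hℓ x hix hxp

lemma sum_range_shift_pos {ℓ : ℕ → ℝ} {i q : ℕ} (hq : 1 ≤ q)
    (hℓ : ∀ x, i ≤ x → x < i + q → 0 < ℓ x) :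
    0 < ∑ h ∈ range q, ℓ (i + h) :=
  sum_pos (fun h hh => hℓ _ (by omega) (by simp at hh; omega)) ⟨0, by simp; omega⟩

lemma Real.log_sq_div_mul {x y z : ℝ} (hx : 0 < x) (hy : 0 < y) (hz : 0 < z) :
    Real.log (x ^ 2 / (y * z)) = 2 * Real.log x - Real.log y - Real.log z := by
  rw [Real.log_div (by positivity) (by positivity), Real.log_mul hy.ne' hz.ne', Real.log_pow]
  push_cast
  ring

lemma sum_Icc_two_mul_sub_sub_eq (U V W : ℕ → ℝ) (c : ℕ) :
    ∑ i ∈ Icc 1 (c + 1), (2 * U i - V i - W i)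
      = ∑ i ∈ Icc 1 c, (U i + U (i + 1) - V i - W (i + 1))
        + (U 1 - W 1) + (U (c + 1) - V (c + 1)) := by
  induction c with
  | zero =>
    simp only [zero_add, Icc_self, sum_singleton, Icc_eq_empty_of_lt one_pos, sum_empty]
    ring
  | succ c ih =>
    rw [sum_Icc_succ_top (by omega), ih, sum_Icc_succ_top (by omega)]
    ring

/-- `u k i` stands for `log S_{i,k}`. -/
theorem sum_two_mul_sub_le_sum_sum (n a : ℕ) (ha : 1 ≤ a) (u : ℕ → ℕ → ℝ)
    (hu : ∀ i p j q, 1 ≤ i → i ≤ j → j + q ≤ i + p → i + p ≤ n + 1 → 1 ≤ q →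
      u q j ≤ u p i)
    (b : ℕ) (hab : a ≤ b) (hb : b ≤ n - 1) :
    ∑ i ∈ Icc 1 (n - b), (2 * u (b + 1) i - u a i - u a (i + (b - a) + 1))
      ≤ ∑ j ∈ Icc a b, ∑ i ∈ Icc 1 (n - j), (2 * u (j + 1) i - u j i - u j (i + 1)) := by
  induction b, hab using Nat.le_induction with
  | base => simp
  | succ b hab ih =>
    set c := n - (b + 1)
    have hnb : n - b = c + 1 := by omega
    have hfirst : u a (1 + (b - a) + 1) ≤ u (b + 1) 1 :=
      hu _ _ _ _ le_rfl (by omega) (by omega) (by omega) ha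
    have hlast : u a (n - b) ≤ u (b + 1) (n - b) :=
      hu _ _ _ _ (by omega) le_rfl (by omega) (by omega) ha
    have hstep := sum_Icc_two_mul_sub_sub_eq (u (b + 1)) (u a) (fun i => u a (i + (b - a) + 1)) c
    rw [← hnb] at hstep
    rw [sum_Icc_succ_top (by omega)]
    calc _
        = ∑ i ∈ Icc 1 c, (u (b + 1) i + u (b + 1) (i + 1) - u a i - u a (i + 1 + (b - a) + 1))
          + ∑ i ∈ Icc 1 c, (2 * u (b + 1 + 1) i - u (b + 1) i - u (b + 1) (i + 1)) := by
          rw [← sum_add_distrib]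
          refine sum_congr rfl fun i _ => ?_
          rw [show i + 1 + (b - a) + 1 = i + (b + 1 - a) + 1 by omega]
          ring
      _ ≤ ∑ i ∈ Icc 1 (n - b), (2 * u (b + 1) i - u a i - u a (i + (b - a) + 1))
          + ∑ i ∈ Icc 1 c, (2 * u (b + 1 + 1) i - u (b + 1) i - u (b + 1) (i + 1)) := by
          gcongr
          rw [hstep]
          linarith
      _ ≤ _ := by gcongr; exact ih (by omega)

theorem stmt_2_general (n : ℕ) (ℓ : ℕ → ℝ) (hpos : ∀ i, 1 ≤ i → i ≤ n → 0 < ℓ i)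
    (S : ℕ → ℕ → ℝ) (hS : ∀ i k, S i k = ∑ h ∈ Finset.range k, ℓ (i + h))
    (L : ℕ → ℝ)
    (hL : ∀ k, 1 ≤ k → k ≤ n - 1 →
      L k = ∑ i ∈ Finset.Icc 1 (n - k), Real.log ((S i (k + 1)) ^ 2 / (S i k * S (i + 1) k)))
    (a b : ℕ) (ha : 1 ≤ a) (hab : a ≤ b) (hb : b ≤ n - 1) :
    ∑ i ∈ Finset.Icc 1 (n - b),
        Real.log ((S i (b + 1)) ^ 2 / (S i a * S (i + (b - a) + 1) a))
      ≤ ∑ j ∈ Finset.Icc a b, L j := by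
  have hSpos : ∀ i k, 1 ≤ i → 1 ≤ k → i + k ≤ n + 1 → 0 < S i k :=
    fun i k hi hk hik =>
      hS i k ▸ sum_range_shift_pos hk fun x hx hxk => hpos x (by omega) (by omega)
  have hSmono : ∀ i p j q, 1 ≤ i → i ≤ j → j + q ≤ i + p → i + p ≤ n + 1 →
      1 ≤ q → Real.log (S j q) ≤ Real.log (S i p) := fun i p j q hi hij hjq hip hq =>
    Real.log_le_log (hSpos j q (by omega) hq (by omega)) <| by
      rw [hS, hS]
      exact sum_range_shift_le_of_subset hij hjq fun x hx hxp =>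
        (hpos x (by omega) (by omega)).le
  calc _ = ∑ i ∈ Icc 1 (n - b), (2 * Real.log (S i (b + 1)) - Real.log (S i a)
          - Real.log (S (i + (b - a) + 1) a)) :=
        sum_congr rfl fun i hi => by
          obtain ⟨hi1, hi2⟩ := mem_Icc.mp hi
          exact Real.log_sq_div_mul (hSpos _ _ hi1 (by omega) (by omega))
            (hSpos _ _ hi1 ha (by omega)) (hSpos _ _ (by omega) ha (by omega))
    _ ≤ _ := sum_two_mul_sub_le_sum_sum n a ha (fun k i => Real.log (S i k)) hSmono b hab hb
    _ = _ := sum_congr rfl fun j hj => by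
          obtain ⟨hj1, hj2⟩ := mem_Icc.mp hj
          rw [hL j (by omega) (by omega)]
          refine sum_congr rfl fun i hi => ?_
          obtain ⟨hi1, hi2⟩ := mem_Icc.mp hi
          exact (Real.log_sq_div_mul (hSpos _ _ hi1 (by omega) (by omega))
            (hSpos _ _ hi1 (by omega) (by omega)) (hSpos _ _ (by omega) (by omega) (by omega))).symm

theorem stmt_2 (n : ℕ) (hn : 2 ≤ n) (ℓ : ℕ → ℝ) (hpos : ∀ i, 1 ≤ i → i ≤ n → 0 < ℓ i)
    (S : ℕ → ℕ → ℝ) (hS : ∀ i k, S i k = ∑ h ∈ Finset.range k, ℓ (i + h))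
    (L : ℕ → ℝ)
    (hL : ∀ k, 1 ≤ k → k ≤ n - 1 →
      L k = ∑ i ∈ Finset.Icc 1 (n - k), Real.log ((S i (k + 1)) ^ 2 / (S i k * S (i + 1) k)))
    (a b : ℕ) (ha : 1 ≤ a) (hab : a ≤ b) (hb : b ≤ n - 1) :
    ∑ i ∈ Finset.Icc 1 (n - b),
        Real.log ((S i (b + 1)) ^ 2 / (S i a * S (i + (b - a) + 1) a))
      ≤ ∑ j ∈ Finset.Icc a b, L j :=
  stmt_2_general n ℓ hpos S hS L hL a b ha hab hb
end

section
/- Let m ≥ 1 be an integer, set a := 2^{m-1} and b := 2^m - 1, and let n ≥ 2^m. For positive reals ℓ₁,…,ℓₙ with S_{i,k} := Σ_{h=0}^{k-1} ℓ_{i+h} and L_k := Σ_{i=1}^{n-k} log(S_{i,k+1}²/(S_{i,k}·S_{i+1,k})), one has Σ_{k=2^{m-1}}^{2^m - 1} L_k ≥ (n - 2^m + 1)·2·log 2. -/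
theorem stmt_3 (m n : ℕ) (hm : 1 ≤ m) (hn : 2 ^ m ≤ n)
    (ℓ : ℕ → ℝ) (hpos : ∀ i, 1 ≤ i → i ≤ n → 0 < ℓ i)
    (S : ℕ → ℕ → ℝ) (hS : ∀ i k, S i k = ∑ h ∈ Finset.range k, ℓ (i + h))
    (L : ℕ → ℝ)
    (hL : ∀ k, 1 ≤ k → k ≤ n - 1 →
      L k = ∑ i ∈ Finset.Icc 1 (n - k), Real.log ((S i (k + 1)) ^ 2 / (S i k * S (i + 1) k))) :
    ((n - 2 ^ m + 1 : ℕ) : ℝ) * (2 * Real.log 2)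
      ≤ ∑ k ∈ Finset.Icc (2 ^ (m - 1)) (2 ^ m - 1), L k := by
  set a := 2 ^ (m - 1) with ha_def
  have ha : 1 ≤ a := Nat.one_le_two_pow
  have h2 : 2 ^ m = 2 * a := by
    rw [ha_def, ← pow_succ']
    congr 1
    omega
  rw [h2] at hn ⊢
  obtain ⟨c, hc⟩ := Nat.exists_eq_add_of_le hn
  -- basic facts about S
  have hSpos : ∀ i k, 1 ≤ i → 1 ≤ k → i + k ≤ n + 1 → 0 < S i k := by
    intro i k hi hk hik
    rw [hS]
    apply Finset.sum_pos
    · intro h hh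
      rw [Finset.mem_range] at hh
      exact hpos _ (by omega) (by omega)
    · exact Finset.nonempty_range_iff.mpr (by omega)
  have hSnn : ∀ i k, 1 ≤ i → i + k ≤ n + 1 → 0 ≤ S i k := by
    intro i k hi hik
    rw [hS]
    apply Finset.sum_nonneg
    intro h hh
    rw [Finset.mem_range] at hh
    exact (hpos _ (by omega) (by omega)).le
  have hsplit : ∀ i k l, S i (k + l) = S i k + S (i + k) l := by
    intro i k l
    rw [hS, hS, hS, Finset.sum_range_add]
    congr 1
    apply Finset.sum_congr rfl
    intro x _
    congr 1
    omega
  have hmono : ∀ i k k', 1 ≤ i → k ≤ k' → i + k' ≤ n + 1 → S i k ≤ S i k' := by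
    intro i k k' hi hkk hik
    rw [hS, hS]
    apply Finset.sum_le_sum_of_subset_of_nonneg (Finset.range_subset_range.mpr hkk)
    intro h hh _
    rw [Finset.mem_range] at hh
    exact (hpos _ (by omega) (by omega)).le
  have hAM : ∀ x y : ℝ, 0 < x → 0 < y →
      2 * Real.log 2 + (Real.log x + Real.log y) ≤ 2 * Real.log (x + y) := by
    intro x y hx hy
    have h1 : Real.log (2 * 2 * (x * y)) ≤ Real.log ((x + y) ^ 2) :=
      Real.log_le_log (by positivity) (by nlinarith [sq_nonneg (x - y)])
    rw [Real.log_mul (by positivity) (by positivity),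
      Real.log_mul (by norm_num) (by norm_num),
      Real.log_mul hx.ne' hy.ne', Real.log_pow] at h1
    push_cast at h1
    linarith
  -- index-shift lemma
  have hshift : ∀ (s t d : ℕ) (f : ℕ → ℝ),
      ∑ i ∈ Finset.Icc s t, f (i + d) = ∑ j ∈ Finset.Icc (s + d) (t + d), f j := by
    intro s t d f
    have hmap : Finset.Icc (s + d) (t + d) = Finset.map (addLeftEmbedding d) (Finset.Icc s t) := by
      rw [Finset.map_add_left_Icc]
      congr 1 <;> omega
    rw [hmap, Finset.sum_map]
    apply Finset.sum_congr rfl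
    intro x _
    congr 1
    simp [addLeftEmbedding_apply]
    omega
  -- index-reversal lemma
  have hrev : ∀ (s t : ℕ) (f : ℕ → ℝ), s ≤ n → t ≤ n →
      ∑ k ∈ Finset.Icc s t, f (n - k) = ∑ i ∈ Finset.Icc (n - t) (n - s), f i := by
    intro s t f hs ht
    refine Finset.sum_bij' (fun k _ => n - k) (fun i _ => n - i) ?_ ?_ ?_ ?_ ?_
    · intro x hx; rw [Finset.mem_Icc] at hx; beta_reduce; rw [Finset.mem_Icc]; omega
    · intro x hx; rw [Finset.mem_Icc] at hx; beta_reduce; rw [Finset.mem_Icc]; omega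
    · intro x hx; rw [Finset.mem_Icc] at hx; beta_reduce; omega
    · intro x hx; rw [Finset.mem_Icc] at hx; beta_reduce; omega
    · intro x hx; rfl
  -- the auxiliary quantities
  set A : ℕ → ℝ := fun k => ∑ i ∈ Finset.Icc 1 (n - k), Real.log (S i k) with hA
  set u : ℕ → ℝ := fun k => Real.log (S (n - k + 1) k) with hu
  have hAdef : ∀ k, A k = ∑ i ∈ Finset.Icc 1 (n - k), Real.log (S i k) := fun k => by rw [hA]
  have hudef : ∀ k, u k = Real.log (S (n - k + 1) k) := fun k => by rw [hu]
  have hkey : ∀ k, a ≤ k → k ≤ 2 * a - 1 →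
      L k = (2 * A (k + 1) - 2 * A k) + (2 * u (k + 1) - u k) + Real.log (S 1 k) := by
    intro k hk1 hk2
    have hk : 1 ≤ k := le_trans ha hk1
    have hkn : k + 1 ≤ n := by omega
    rw [hL k hk (by omega)]
    have hterm : ∀ i ∈ Finset.Icc 1 (n - k),
        Real.log ((S i (k + 1)) ^ 2 / (S i k * S (i + 1) k))
          = 2 * Real.log (S i (k + 1)) - Real.log (S i k) - Real.log (S (i + 1) k) := by
      intro i hi
      rw [Finset.mem_Icc] at hi
      have p1 : 0 < S i (k + 1) := hSpos i (k + 1) hi.1 (by omega) (by omega)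
      have p2 : 0 < S i k := hSpos i k hi.1 (by omega) (by omega)
      have p3 : 0 < S (i + 1) k := hSpos (i + 1) k (by omega) (by omega) (by omega)
      rw [Real.log_div (by positivity) (by positivity), Real.log_mul p2.ne' p3.ne',
        Real.log_pow]
      push_cast
      ring
    rw [Finset.sum_congr rfl hterm, Finset.sum_sub_distrib, Finset.sum_sub_distrib]
    have e1 : ∑ i ∈ Finset.Icc 1 (n - k), 2 * Real.log (S i (k + 1))
        = 2 * A (k + 1) + 2 * u (k + 1) := by
      rw [← Finset.mul_sum]
      have hnk : n - k = (n - (k + 1)) + 1 := by omega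
      rw [hnk, Finset.sum_Icc_succ_top (by omega)]
      rw [hAdef, hudef]
      have : n - (k + 1) + 1 = n - k := by omega
      rw [this]
      ring
    have e3 : ∑ i ∈ Finset.Icc 1 (n - k), Real.log (S (i + 1) k)
        = A k - Real.log (S 1 k) + u k := by
      rw [hshift 1 (n - k) 1 (fun j => Real.log (S j k))]
      have h1 : n - k + 1 = (n - k) + 1 := rfl
      rw [Finset.sum_Icc_succ_top (by omega : 1 + 1 ≤ (n - k) + 1)]
      have hins : Finset.Icc 1 (n - k) = insert 1 (Finset.Icc (1 + 1) (n - k)) := by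
        ext x
        simp only [Finset.mem_Icc, Finset.mem_insert]
        omega
      rw [hAdef, hudef, hins, Finset.sum_insert (by simp)]
      ring
    rw [e1, e3, hAdef k]
    ring
  -- telescoping machinery
  have hIccIco : Finset.Icc a (2 * a - 1) = Finset.Ico a (2 * a) := by
    ext x; simp only [Finset.mem_Icc, Finset.mem_Ico]; omega
  have htel : ∀ F : ℕ → ℝ,
      ∑ k ∈ Finset.Icc a (2 * a - 1), (F (k + 1) - F k) = F (2 * a) - F a := by
    intro F
    rw [hIccIco, Finset.sum_Ico_eq_sub _ (by omega), Finset.sum_range_sub, Finset.sum_range_sub]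
    ring
  have hsum : ∑ k ∈ Finset.Icc a (2 * a - 1), L k
      = (2 * A (2 * a) - 2 * A a)
        + ((2 * u (2 * a) - u a) + ∑ k ∈ Finset.Icc (a + 1) (2 * a - 1), u k)
        + ∑ k ∈ Finset.Icc a (2 * a - 1), Real.log (S 1 k) := by
    rw [Finset.sum_congr rfl (fun k hk =>
      hkey k (Finset.mem_Icc.mp hk).1 (Finset.mem_Icc.mp hk).2)]
    rw [Finset.sum_add_distrib, Finset.sum_add_distrib]
    have t1 := htel (fun k => 2 * A k)
    beta_reduce at t1
    have t2 : ∑ k ∈ Finset.Icc a (2 * a - 1), (2 * u (k + 1) - u k)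
        = (2 * u (2 * a) - u a) + ∑ k ∈ Finset.Icc (a + 1) (2 * a - 1), u k := by
      have e1' : ∑ k ∈ Finset.Icc a (2 * a - 1), (2 * u (k + 1) - u k)
          = ∑ k ∈ Finset.Icc a (2 * a - 1), ((u (k + 1) - u k) + u (k + 1)) :=
        Finset.sum_congr rfl (fun k _ => by ring)
      rw [e1', Finset.sum_add_distrib, htel u, hshift a (2 * a - 1) 1 u,
        Finset.sum_Icc_succ_top (by omega : a + 1 ≤ 2 * a - 1 + 1),
        (by omega : 2 * a - 1 + 1 = 2 * a)]
      ring
    rw [t1, t2]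
  -- bound on the main telescoped part
  have hb_main : (c : ℝ) * (2 * Real.log 2)
      - (∑ i ∈ Finset.Icc 1 a, Real.log (S i a))
      - (∑ i ∈ Finset.Icc (c + 1) (n - a), Real.log (S i a))
      ≤ 2 * A (2 * a) - 2 * A a := by
    have hstep : ∑ i ∈ Finset.Icc 1 c,
        (2 * Real.log 2 + (Real.log (S i a) + Real.log (S (i + a) a)))
        ≤ ∑ i ∈ Finset.Icc 1 c, (2 * Real.log (S i (2 * a))) := by
      apply Finset.sum_le_sum
      intro i hi
      rw [Finset.mem_Icc] at hi
      have hsp : S i (2 * a) = S i a + S (i + a) a := by rw [two_mul, hsplit]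
      rw [hsp]
      exact hAM _ _ (hSpos _ _ hi.1 ha (by omega)) (hSpos _ _ (by omega) ha (by omega))
    rw [Finset.sum_add_distrib, Finset.sum_add_distrib, Finset.sum_const, Nat.card_Icc,
      Nat.add_sub_cancel, nsmul_eq_mul, ← Finset.mul_sum] at hstep
    have hsh := hshift 1 c a (fun j => Real.log (S j a))
    beta_reduce at hsh
    rw [hsh, (by omega : 1 + a = a + 1), (by omega : c + a = n - a)] at hstep
    have hsplit1 : ∑ i ∈ Finset.Icc 1 c, Real.log (S i a)
        + ∑ i ∈ Finset.Icc (c + 1) (n - a), Real.log (S i a)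
        = ∑ i ∈ Finset.Icc 1 (n - a), Real.log (S i a) := by
      rw [(by ext x; simp only [Finset.mem_Icc, Finset.mem_Ioc]; omega :
            Finset.Icc 1 c = Finset.Ioc 0 c),
          (by ext x; simp only [Finset.mem_Icc, Finset.mem_Ioc]; omega :
            Finset.Icc (c + 1) (n - a) = Finset.Ioc c (n - a)),
          (by ext x; simp only [Finset.mem_Icc, Finset.mem_Ioc]; omega :
            Finset.Icc 1 (n - a) = Finset.Ioc 0 (n - a))]
      exact Finset.sum_Ioc_consecutive _ (by omega) (by omega)
    have hsplit2 : ∑ i ∈ Finset.Icc 1 a, Real.log (S i a)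
        + ∑ i ∈ Finset.Icc (a + 1) (n - a), Real.log (S i a)
        = ∑ i ∈ Finset.Icc 1 (n - a), Real.log (S i a) := by
      rw [(by ext x; simp only [Finset.mem_Icc, Finset.mem_Ioc]; omega :
            Finset.Icc 1 a = Finset.Ioc 0 a),
          (by ext x; simp only [Finset.mem_Icc, Finset.mem_Ioc]; omega :
            Finset.Icc (a + 1) (n - a) = Finset.Ioc a (n - a)),
          (by ext x; simp only [Finset.mem_Icc, Finset.mem_Ioc]; omega :
            Finset.Icc 1 (n - a) = Finset.Ioc 0 (n - a))]
      exact Finset.sum_Ioc_consecutive _ (by omega) (by omega)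
    rw [hAdef (2 * a), hAdef a, (by omega : n - 2 * a = c)]
    linarith [hstep, hsplit1, hsplit2]
  -- bound on the front boundary part
  have hb_front : ∑ i ∈ Finset.Icc 1 a, Real.log (S i a)
      ≤ ∑ k ∈ Finset.Icc a (2 * a - 1), Real.log (S 1 k) := by
    have hre := hshift 1 a (a - 1) (fun j => Real.log (S 1 j))
    beta_reduce at hre
    rw [(by omega : 1 + (a - 1) = a), (by omega : a + (a - 1) = 2 * a - 1)] at hre
    rw [← hre]
    apply Finset.sum_le_sum
    intro i hi
    rw [Finset.mem_Icc] at hi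
    rw [(by omega : i + (a - 1) = (i - 1) + a), hsplit 1 (i - 1) a,
      (by omega : 1 + (i - 1) = i)]
    apply Real.log_le_log (hSpos i a hi.1 ha (by omega))
    have := hSnn 1 (i - 1) le_rfl (by omega)
    linarith
  -- bound on the tail boundary part
  have hb_tail : 2 * Real.log 2 + ∑ i ∈ Finset.Icc (c + 1) (n - a), Real.log (S i a)
      ≤ (2 * u (2 * a) - u a) + ∑ k ∈ Finset.Icc (a + 1) (2 * a - 1), u k := by
    have hp1 : 2 * Real.log 2 + Real.log (S (c + 1) a) ≤ 2 * u (2 * a) - u a := by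
      have hsp : S (n - 2 * a + 1) (2 * a) = S (c + 1) a + S (n - a + 1) a := by
        rw [(by omega : n - 2 * a + 1 = c + 1), (by ring : 2 * a = a + a),
          hsplit (c + 1) a a, (by omega : c + 1 + a = n - a + 1)]
      have hx : 0 < S (c + 1) a := hSpos _ _ (by omega) ha (by omega)
      have hy : 0 < S (n - a + 1) a := hSpos _ _ (by omega) ha (by omega)
      have hh := hAM _ _ hx hy
      rw [hudef (2 * a), hudef a, hsp]
      linarith
    have hp2 : ∑ k ∈ Finset.Icc (a + 1) (2 * a - 1), Real.log (S (n - k + 1) a)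
        ≤ ∑ k ∈ Finset.Icc (a + 1) (2 * a - 1), u k := by
      apply Finset.sum_le_sum
      intro k hk
      rw [Finset.mem_Icc] at hk
      rw [hudef k]
      exact Real.log_le_log (hSpos _ _ (by omega) ha (by omega))
        (hmono _ _ _ (by omega) (by omega) (by omega))
    have hp3 : ∑ k ∈ Finset.Icc (a + 1) (2 * a - 1), Real.log (S (n - k + 1) a)
        = ∑ i ∈ Finset.Icc (c + 2) (n - a), Real.log (S i a) := by
      have h := hrev (a + 1) (2 * a - 1) (fun j => Real.log (S (j + 1) a)) (by omega) (by omega)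
      beta_reduce at h
      rw [h]
      have h2 := hshift (n - (2 * a - 1)) (n - (a + 1)) 1 (fun j => Real.log (S j a))
      beta_reduce at h2
      rw [h2, (by omega : n - (2 * a - 1) + 1 = c + 2), (by omega : n - (a + 1) + 1 = n - a)]
    have hp4 : ∑ i ∈ Finset.Icc (c + 1) (n - a), Real.log (S i a)
        = Real.log (S (c + 1) a) + ∑ i ∈ Finset.Icc (c + 2) (n - a), Real.log (S i a) := by
      rw [(by ext x; simp only [Finset.mem_Icc, Finset.mem_insert]; omega :
            Finset.Icc (c + 1) (n - a) = insert (c + 1) (Finset.Icc (c + 2) (n - a))),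
        Finset.sum_insert (by simp only [Finset.mem_Icc]; omega)]
    linarith
  rw [(by omega : n - 2 * a + 1 = c + 1), hsum]
  push_cast
  linarith [hb_main, hb_front, hb_tail]
end
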